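/- Let f_n : ℝ → ℝ be differentiable functions with f_n(x) = logit(Φ(c√n + d + x)) for fixed c ≠ 0 and d ∈ ℝ. Then for any two values x₁, x₂ ∈ ℝ, the difference of limiting slopes vanishes: lim_{n→∞} [d/dn f_n evaluated with offset x₁] = lim_{n→∞} [d/dn f_n evaluated with offset x₂] = sign(c)·c²/2. -/

import Mathlib

open Real Set Filter

/-- The logit function logit(x) = log x − log(1 − x). -/
noncomputable def logit (x : ℝ) : ℝ := Real.log x - Real.log (1 - x)

/-- The standard normal cumulative distribution function Φ. -/
noncomputable def stdNormalCDF (x : ℝ) : ℝ :=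
  ∫ t in Iic x, Real.exp (-t ^ 2 / 2) / Real.sqrt (2 * Real.pi)

open MeasureTheory Topology

/-- The standard normal probability density function. -/
noncomputable def gpdf (t : ℝ) : ℝ := Real.exp (-t ^ 2 / 2) / Real.sqrt (2 * Real.pi)


lemma gpdf_pos (t : ℝ) : 0 < gpdf t :=
  div_pos (Real.exp_pos _) (Real.sqrt_pos.2 (by positivity))

lemma gpdf_cont : Continuous gpdf := by
  unfold gpdf; fun_prop

lemma gpdf_integrable : Integrable gpdf := by
  have h : Integrable (fun t : ℝ => Real.exp (-(1/2 : ℝ) * t ^ 2)) := integrable_exp_neg_mul_sq (by norm_num)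
  have := h.div_const (Real.sqrt (2 * Real.pi))
  refine this.congr (Filter.Eventually.of_forall fun t => ?_)
  unfold gpdf; ring_nf

lemma gpdf_total : ∫ t, gpdf t = 1 := by
  unfold gpdf
  rw [integral_div]
  have : ∀ t : ℝ, -t ^ 2 / 2 = -(1/2 : ℝ) * t ^ 2 := fun t => by ring
  simp_rw [this]
  rw [integral_gaussian]
  rw [div_eq_one_iff_eq (by positivity)]
  rw [show (π / (1/2) : ℝ) = 2 * π by ring]

lemma cdf_eq (x : ℝ) : stdNormalCDF x = ∫ t in Iic x, gpdf t := rfl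

lemma cdf_pos (x : ℝ) : 0 < stdNormalCDF x := by
  rw [cdf_eq]
  rw [setIntegral_pos_iff_support_of_nonneg_ae
    (Filter.Eventually.of_forall fun t => (gpdf_pos t).le) gpdf_integrable.integrableOn]
  have : Function.support gpdf = univ := by
    ext t; simp [Function.mem_support, (gpdf_pos t).ne']
  rw [this, univ_inter]
  simp [Real.volume_Iic]

lemma one_sub_cdf (x : ℝ) : 1 - stdNormalCDF x = ∫ t in Ioi x, gpdf t := by
  have := integral_add_compl (measurableSet_Iic (a := x)) gpdf_integrable
  rw [compl_Iic, gpdf_total] at this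
  rw [cdf_eq]; linarith [this]

lemma cdf_lt_one (x : ℝ) : stdNormalCDF x < 1 := by
  have h : 0 < ∫ t in Ioi x, gpdf t := by
    rw [setIntegral_pos_iff_support_of_nonneg_ae
      (Filter.Eventually.of_forall fun t => (gpdf_pos t).le) gpdf_integrable.integrableOn]
    have : Function.support gpdf = univ := by
      ext t; simp [Function.mem_support, (gpdf_pos t).ne']
    rw [this, univ_inter]
    simp [Real.volume_Ioi]
  linarith [one_sub_cdf x]

lemma cdf_symm (x : ℝ) : stdNormalCDF (-x) = 1 - stdNormalCDF x := by
  have h : ∫ t in Iic (-x), gpdf t = ∫ t in Iic (-x), gpdf (-t) := by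
    congr 1 with t; unfold gpdf; ring_nf
  rw [one_sub_cdf, cdf_eq, h, integral_comp_neg_Iic, neg_neg]

lemma cdf_eq_add (y : ℝ) : stdNormalCDF y = stdNormalCDF 0 + ∫ t in (0:ℝ)..y, gpdf t := by
  rw [cdf_eq, cdf_eq, ← intervalIntegral.integral_Iic_sub_Iic (gpdf_integrable.integrableOn)
    (gpdf_integrable.integrableOn)]
  ring

lemma cdf_hasDerivAt (y : ℝ) : HasDerivAt stdNormalCDF (gpdf y) y := by
  have h : HasDerivAt (fun u => stdNormalCDF 0 + ∫ t in (0:ℝ)..u, gpdf t) (gpdf y) y := by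
    refine (hasDerivAt_const y (stdNormalCDF 0)).add ?_ |>.congr_deriv (by ring)
    exact intervalIntegral.integral_hasDerivAt_right
      (gpdf_integrable.intervalIntegrable)
      (gpdf_cont.stronglyMeasurableAtFilter _ _) gpdf_cont.continuousAt
  exact h.congr_of_eventuallyEq (Filter.Eventually.of_forall fun u => (cdf_eq_add u))

lemma cdf_tendsto_one : Tendsto stdNormalCDF atTop (𝓝 1) := by
  have h : Tendsto (fun y : ℝ => stdNormalCDF 0 + ∫ t in (0:ℝ)..y, gpdf t) atTop
      (𝓝 (stdNormalCDF 0 + ∫ t in Ioi (0:ℝ), gpdf t)) :=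
    tendsto_const_nhds.add
      (intervalIntegral_tendsto_integral_Ioi 0 gpdf_integrable.integrableOn tendsto_id)
  have he : stdNormalCDF 0 + ∫ t in Ioi (0:ℝ), gpdf t = 1 := by
    have := one_sub_cdf 0; linarith
  rw [he] at h
  exact h.congr (fun y => (cdf_eq_add y).symm)

lemma one_sub_cdf_tendsto_zero : Tendsto (fun y => 1 - stdNormalCDF y) atTop (𝓝 0) := by
  have := tendsto_const_nhds (α := ℝ) (x := (1:ℝ)) (f := atTop) |>.sub cdf_tendsto_one
  simpa using this

lemma gpdf_hasDerivAt (y : ℝ) : HasDerivAt gpdf (-y * gpdf y) y := by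
  have h1 : HasDerivAt (fun t : ℝ => -t ^ 2 / 2) (-y) y := by
    have := ((hasDerivAt_pow 2 y).neg).div_const 2
    exact this.congr_deriv (by norm_num; ring)
  have h2 := (h1.exp).div_const (Real.sqrt (2 * Real.pi))
  exact h2.congr_deriv (by unfold gpdf; ring)

lemma gpdf_tendsto_zero : Tendsto gpdf atTop (𝓝 0) := by
  have h1 : Tendsto (fun t : ℝ => -t ^ 2 / 2) atTop atBot := by
    have h2 : Tendsto (fun t : ℝ => t ^ 2 / 2) atTop atTop :=
      (tendsto_pow_atTop two_ne_zero).atTop_div_const (by norm_num)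
    exact (tendsto_neg_atTop_atBot.comp h2).congr (fun t => by simp [neg_div])
  have := (Real.tendsto_exp_atBot.comp h1).div_const (Real.sqrt (2 * Real.pi))
  simp only [zero_div] at this
  exact this.congr (fun t => by simp [gpdf, Function.comp])

noncomputable def millsG (y : ℝ) : ℝ := gpdf y / y - (1 - stdNormalCDF y)
noncomputable def millsH (y : ℝ) : ℝ := (1 - stdNormalCDF y) - y * gpdf y / (y ^ 2 + 1)

lemma millsG_hasDerivAt {y : ℝ} (hy : y ≠ 0) :
    HasDerivAt millsG (-(gpdf y / y ^ 2)) y := by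
  have h1 : HasDerivAt (fun y => gpdf y / y) ((-y * gpdf y * y - gpdf y * 1) / y ^ 2) y :=
    (gpdf_hasDerivAt y).div (hasDerivAt_id y) hy
  have h2 : HasDerivAt (fun y => 1 - stdNormalCDF y) (-gpdf y) y :=
    (cdf_hasDerivAt y).const_sub 1
  have := h1.sub h2
  exact this.congr_deriv (by field_simp; ring)

lemma millsH_hasDerivAt (y : ℝ) :
    HasDerivAt millsH (-(2 * gpdf y / (y ^ 2 + 1) ^ 2)) y := by
  have hne : y ^ 2 + 1 ≠ 0 := by positivity
  have h2 : HasDerivAt (fun y => 1 - stdNormalCDF y) (-gpdf y) y :=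
    (cdf_hasDerivAt y).const_sub 1
  have h1 := ((hasDerivAt_id y).mul (gpdf_hasDerivAt y)).div
      (((hasDerivAt_pow 2 y)).add_const 1) hne
  have := h2.sub h1
  exact this.congr_deriv (by simp only [Pi.mul_apply, id]; field_simp; ring)

lemma millsG_tendsto : Tendsto millsG atTop (𝓝 0) := by
  have h1 : Tendsto (fun y => gpdf y / y) atTop (𝓝 0) := by
    have := gpdf_tendsto_zero.mul tendsto_inv_atTop_zero
    simpa [div_eq_mul_inv] using this
  have := h1.sub one_sub_cdf_tendsto_zero
  rw [sub_zero] at this; exact this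

lemma millsH_tendsto : Tendsto millsH atTop (𝓝 0) := by
  have h1 : Tendsto (fun y : ℝ => y * gpdf y / (y ^ 2 + 1)) atTop (𝓝 0) := by
    apply squeeze_zero' (g := gpdf)
    · filter_upwards [eventually_ge_atTop (0:ℝ)] with y hy
      have hg := (gpdf_pos y).le
      positivity
    · filter_upwards [eventually_ge_atTop (0:ℝ)] with y hy
      rw [div_le_iff₀ (by positivity)]
      nlinarith [gpdf_pos y, sq_nonneg (y - 1)]
    · exact gpdf_tendsto_zero
  have := one_sub_cdf_tendsto_zero.sub h1
  rw [sub_zero] at this; exact this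

lemma millsG_nonneg {y : ℝ} (hy : 0 < y) : 0 ≤ millsG y := by
  have anti : StrictAntiOn millsG (Ioi 0) := by
    apply strictAntiOn_of_deriv_neg (convex_Ioi 0)
    · intro z hz
      exact (millsG_hasDerivAt (ne_of_gt hz)).continuousAt.continuousWithinAt
    · intro z hz
      rw [interior_Ioi] at hz
      have hz' : (0:ℝ) < z := hz
      rw [(millsG_hasDerivAt (ne_of_gt hz')).deriv]
      have hg := gpdf_pos z
      have h2 : 0 < gpdf z / z ^ 2 := by positivity
      linarith
  refine le_of_tendsto millsG_tendsto ?_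
  filter_upwards [eventually_gt_atTop y] with z hz
  exact (anti hy (hy.trans hz) hz).le

lemma millsH_nonneg {y : ℝ} (hy : 0 < y) : 0 ≤ millsH y := by
  have anti : StrictAntiOn millsH (Ioi 0) := by
    apply strictAntiOn_of_deriv_neg (convex_Ioi 0)
    · intro z hz
      exact (millsH_hasDerivAt z).continuousAt.continuousWithinAt
    · intro z hz
      rw [(millsH_hasDerivAt z).deriv]
      have hg := gpdf_pos z
      have h2 : 0 < 2 * gpdf z / (z ^ 2 + 1) ^ 2 := by positivity
      linarith
  refine le_of_tendsto millsH_tendsto ?_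
  filter_upwards [eventually_gt_atTop y] with z hz
  exact (anti hy (hy.trans hz) hz).le

lemma gpdf_even (t : ℝ) : gpdf (-t) = gpdf t := by unfold gpdf; ring_nf

lemma mills_ratio_tendsto :
    Tendsto (fun y => y * (1 - stdNormalCDF y) / gpdf y) atTop (𝓝 1) := by
  have hlow : Tendsto (fun y : ℝ => y ^ 2 / (y ^ 2 + 1)) atTop (𝓝 1) := by
    have h0 : Tendsto (fun y : ℝ => (y ^ 2 + 1)⁻¹) atTop (𝓝 0) :=
      tendsto_inv_atTop_zero.comp
        (tendsto_atTop_add_const_right atTop 1 (tendsto_pow_atTop two_ne_zero))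
    have := (tendsto_const_nhds (x := (1:ℝ)) (f := atTop)).sub h0
    rw [sub_zero] at this
    exact this.congr fun y => by
      have : (y:ℝ) ^ 2 + 1 ≠ 0 := by positivity
      field_simp
      ring
  refine tendsto_of_tendsto_of_tendsto_of_le_of_le' hlow tendsto_const_nhds ?_ ?_
  · filter_upwards [eventually_gt_atTop (0:ℝ)] with y hy
    have hH := millsH_nonneg hy
    unfold millsH at hH
    have hg := gpdf_pos y
    have h1 : y * gpdf y ≤ (1 - stdNormalCDF y) * (y ^ 2 + 1) := by
      rw [sub_nonneg, div_le_iff₀ (by positivity)] at hH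
      linarith
    rw [div_le_div_iff₀ (by positivity) hg]
    nlinarith
  · filter_upwards [eventually_gt_atTop (0:ℝ)] with y hy
    have hG := millsG_nonneg hy
    unfold millsG at hG
    have hg := gpdf_pos y
    have h1 : (1 - stdNormalCDF y) * y ≤ gpdf y := by
      rw [sub_nonneg] at hG
      calc (1 - stdNormalCDF y) * y ≤ gpdf y / y * y := by nlinarith
      _ = gpdf y := by field_simp
    rw [div_le_one hg]
    linarith

lemma rr_tendsto :
    Tendsto (fun y => gpdf y / (stdNormalCDF y * (1 - stdNormalCDF y) * y)) atTop (𝓝 1) := by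
  have h := (cdf_tendsto_one.mul mills_ratio_tendsto).inv₀ (by norm_num)
  rw [mul_one, inv_one] at h
  refine h.congr' ?_
  filter_upwards [eventually_gt_atTop (0:ℝ)] with y hy
  have h0 := cdf_pos y
  have h1 := cdf_lt_one y
  have hg := gpdf_pos y
  rw [mul_div_assoc]
  rw [mul_div_assoc']
  field_simp

lemma sqrt_tendsto_atTop : Tendsto Real.sqrt atTop atTop := by
  apply tendsto_atTop_atTop.2
  intro b
  refine ⟨b ^ 2, fun n hn => ?_⟩
  have := Real.sqrt_le_sqrt hn
  rw [Real.sqrt_sq_eq_abs] at this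
  exact (le_abs_self b).trans this

lemma logit_hasDerivAt {u : ℝ} (h0 : 0 < u) (h1 : u < 1) :
    HasDerivAt logit (1 / u + 1 / (1 - u)) u := by
  have ha : HasDerivAt (fun v : ℝ => 1 - v) (-1) u := (hasDerivAt_id u).const_sub 1
  have hb := ha.log (by linarith : (1 : ℝ) - u ≠ 0)
  have hc := (Real.hasDerivAt_log h0.ne').sub hb
  have he : u⁻¹ - -1 / (1 - u) = 1 / u + 1 / (1 - u) := by
    field_simp
    ring
  rw [he] at hc
  exact hc

/-- The limiting slope of n ↦ logit(Φ(c√n + d + x)) does not depend on the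
offset x: for every offset x (and in particular for any two offsets x₁, x₂,
which correspond to different quantile levels), the derivative in n tends to
sign(c)·c²/2 as n → ∞, so the difference of limiting slopes vanishes. -/
theorem limit_slope_independent_of_offset (c d : ℝ) (hc : c ≠ 0) :
    ∀ x : ℝ,
      Tendsto
        (deriv fun n : ℝ => logit (stdNormalCDF (c * Real.sqrt n + d + x)))
        atTop (nhds (Real.sign c * c ^ 2 / 2)) := by
  intro x
  have hs1 : Real.sign c = 1 ∨ Real.sign c = -1 := by
    rcases hc.lt_or_gt with h | h
    · exact Or.inr (Real.sign_of_neg h)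
    · exact Or.inl (Real.sign_of_pos h)
  set s : ℝ := Real.sign c with hs
  have hsc : 0 < s * c := by
    rcases hc.lt_or_gt with h | h
    · rw [hs, Real.sign_of_neg h]; nlinarith
    · rw [hs, Real.sign_of_pos h]; nlinarith
  -- the explicit derivative
  set D : ℝ → ℝ := fun n =>
    (1 / stdNormalCDF (c * Real.sqrt n + d + x) +
        1 / (1 - stdNormalCDF (c * Real.sqrt n + d + x))) *
      (gpdf (c * Real.sqrt n + d + x) * (c * (1 / (2 * Real.sqrt n)))) with hD
  have hder : ∀ n : ℝ, 0 < n →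
      HasDerivAt (fun m : ℝ => logit (stdNormalCDF (c * Real.sqrt m + d + x))) (D n) n := by
    intro n hn
    have hinner : HasDerivAt (fun m : ℝ => c * Real.sqrt m + d + x)
        (c * (1 / (2 * Real.sqrt n))) n :=
      (((Real.hasDerivAt_sqrt hn.ne').const_mul c).add_const d).add_const x
    have hmid := (cdf_hasDerivAt (c * Real.sqrt n + d + x)).comp n hinner
    have houter := (logit_hasDerivAt (cdf_pos (c * Real.sqrt n + d + x))
      (cdf_lt_one (c * Real.sqrt n + d + x))).comp n hmid
    exact houter
  have hev : (deriv fun n : ℝ => logit (stdNormalCDF (c * Real.sqrt n + d + x))) =ᶠ[atTop] D := by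
    filter_upwards [eventually_gt_atTop (0:ℝ)] with n hn
    exact (hder n hn).deriv
  -- z tends to infinity
  have hz : Tendsto (fun n : ℝ => s * (c * Real.sqrt n + d + x)) atTop atTop := by
    have h1 : Tendsto (fun n : ℝ => s * c * Real.sqrt n) atTop atTop :=
      sqrt_tendsto_atTop.const_mul_atTop hsc
    exact (tendsto_atTop_add_const_right atTop (s * (d + x)) h1).congr fun n => by ring
  have hA := rr_tendsto.comp hz
  have hB : Tendsto (fun n : ℝ => s * c ^ 2 / 2 + s * c * (d + x) / 2 * (Real.sqrt n)⁻¹)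
      atTop (𝓝 (s * c ^ 2 / 2)) := by
    have h0 : Tendsto (fun n : ℝ => (Real.sqrt n)⁻¹) atTop (𝓝 0) :=
      tendsto_inv_atTop_zero.comp sqrt_tendsto_atTop
    have := (tendsto_const_nhds (x := s * c ^ 2 / 2) (f := atTop)).add
      (h0.const_mul (s * c * (d + x) / 2))
    simpa using this
  have hDT : Tendsto D atTop (𝓝 (s * c ^ 2 / 2)) := by
    have hprod := hA.mul hB
    rw [one_mul] at hprod
    refine hprod.congr' ?_
    filter_upwards [eventually_gt_atTop (0:ℝ), hz.eventually_gt_atTop 0] with n hn hzn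
    have hr : 0 < Real.sqrt n := Real.sqrt_pos.2 hn
    have e1 : s * c ^ 2 / 2 + s * c * (d + x) / 2 * (Real.sqrt n)⁻¹
        = s * (c * (c * Real.sqrt n + d + x)) / (2 * Real.sqrt n) := by
      field_simp
      ring
    simp only [Function.comp, hD]
    rw [e1]
    obtain ⟨Y, hYe⟩ : ∃ Y, c * Real.sqrt n + d + x = Y := ⟨_, rfl⟩
    rw [hYe] at hzn ⊢
    have h0 := cdf_pos Y
    have h1 := cdf_lt_one Y
    have h1' : 1 - stdNormalCDF Y ≠ 0 := by linarith
    rcases hs1 with h | h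
    · rw [h] at hzn ⊢
      rw [one_mul] at hzn
      have hY : Y ≠ 0 := hzn.ne'
      simp only [one_mul]
      field_simp [h0.ne', h1', hY, hr.ne']
      ring
    · rw [h] at hzn ⊢
      have hY : Y ≠ 0 := by nlinarith
      simp only [neg_one_mul, cdf_symm, gpdf_even, sub_sub_cancel]
      field_simp [h0.ne', h1', hY, hr.ne']
      ring
  rw [show Real.sign c * c ^ 2 / 2 = s * c ^ 2 / 2 from rfl]
  exact hDT.congr' hev.symm
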